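/- arXiv:2201.10172 — 5 statements merged into one kernel-verified Lean document; each statement's English description precedes it below -/
import Mathlib

section
/- Let G = BS(m,n) be the Baumslag–Solitar group with 0 < m ≤ |n|. Then for every integer c ≥ 2, the quotient group γ_c(G)/γ_{c+1}(G) of consecutive terms of the lower central series of G is finite. -/
/-!
Write `γ_k` for the lower central series (`γ_1 = G`). Modulo `γ_{k+2}`, the commutator
`(y, g) ↦ [y, g]` on `γ_k × G` takes central values, is multiplicative in each variable and is
trivial for `y ∈ γ_{k+1}`. Hence `γ_{k+1}/γ_{k+2}` is generated by the classes of `[y, s]`, with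
`s` in a finite generating set and `y` running through `γ_k/γ_{k+1}`: when the latter is finite,
these are finitely many central elements of finite order, and they generate a finite group.
The induction starts at `γ_2/γ_3`, which for `BS(m,n)` is generated by the class of `[t, a]`. The
relation makes `a^(n-m) = [t⁻¹, a^m]` central modulo `γ_3`, so `[t, a]^(n-m) ∈ γ_3`; when `n = m`,
`t` commutes with `a^m` and `[t, a]^m ∈ γ_3`.
-/

def BSRels (m n : ℤ) : Set (FreeGroup (Fin 2)) :=
  {(FreeGroup.of 0)⁻¹ * (FreeGroup.of 1) ^ m * FreeGroup.of 0 * ((FreeGroup.of 1) ^ n)⁻¹}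

/-- The Baumslag–Solitar group `BS(m,n) = ⟨t, a ∣ t⁻¹ aᵐ t = aⁿ⟩`. -/
abbrev BS (m n : ℤ) : Type := PresentedGroup (BSRels m n)

/-- The generator `t` of `BS(m,n)`. -/
def BS.t (m n : ℤ) : BS m n := PresentedGroup.of 0

/-- The generator `a` of `BS(m,n)`. -/
def BS.a (m n : ℤ) : BS m n := PresentedGroup.of 1

/-- `γ_ω(G)`: the intersection of all terms of the lower central series
(`lowerCentralSeries G c` is `γ_{c+1}(G)`). -/
def lcsOmega (G : Type*) [Group G] : Subgroup G := ⨅ c : ℕ, (⊤ : Subgroup G).lowerCentralSeries c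

/-- The commutator `[x,y] = x⁻¹y⁻¹xy`. -/
def commElt {G : Type*} [Group G] (x y : G) : G := x⁻¹ * y⁻¹ * x * y

open Subgroup QuotientGroup
open scoped commutatorElement

/-- `lcsQuotient G d` is `γ_{d+1}(G) / γ_{d+2}(G)`: Mathlib's `lowerCentralSeries` starts at
index `0` with `γ_1 = ⊤`. -/
abbrev lcsQuotient (G : Type*) [Group G] (d : ℕ) : Type _ :=
  (⊤ : Subgroup G).lowerCentralSeries d ⧸
    ((⊤ : Subgroup G).lowerCentralSeries (d + 1)).subgroupOf ((⊤ : Subgroup G).lowerCentralSeries d)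

section General

variable {G : Type*} [Group G]

open scoped IsMulCommutative in
theorem Subgroup.finite_closure_of_isOfFinOrder {k : Set G} (hk : k.Finite)
    (hcomm : ∀ x ∈ k, ∀ y ∈ k, x * y = y * x) (htor : ∀ x ∈ k, IsOfFinOrder x) :
    Finite (Subgroup.closure k) := by
  have := isMulCommutative_closure hcomm
  have : Finite k := hk.to_subtype
  have hgen : Subgroup.closure ((↑) ⁻¹' k : Set (Subgroup.closure k)) ≤
      CommGroup.torsion (Subgroup.closure k) :=
    (closure_le _).mpr fun x hx => Submonoid.isOfFinOrder_coe.mp (htor x hx)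
  rw [closure_closure_coe_preimage] at hgen
  exact CommGroup.finite_of_fg_isMulTorsion _ fun x => hgen (mem_top x)

theorem QuotientGroup.finite_quotient_subgroupOf_of_finite_map {H N : Subgroup G} [N.Normal]
    (h : Finite (H.map (mk' N))) : Finite (H ⧸ N.subgroupOf H) := by
  have hker : ((mk' N).comp H.subtype).ker = N.subgroupOf H := by
    rw [← MonoidHom.comap_ker, ker_mk']; rfl
  have hrange : ((mk' N).comp H.subtype).range = H.map (mk' N) := by
    rw [MonoidHom.range_comp, range_subtype]
  have : Finite ((mk' N).comp H.subtype).range := hrange ▸ h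
  rw [← hker]
  exact Finite.of_equiv _ (quotientKerEquivRange _).toEquiv.symm

variable {d : ℕ}

theorem mk_mem_center_of_mem_lowerCentralSeries {x : G}
    (hx : x ∈ (⊤ : Subgroup G).lowerCentralSeries (d + 1)) :
    mk' ((⊤ : Subgroup G).lowerCentralSeries (d + 2)) x ∈
      center (G ⧸ (⊤ : Subgroup G).lowerCentralSeries (d + 2)) := by
  rw [mem_center_iff]
  intro g
  induction g using QuotientGroup.induction_on with | H g => ?_
  rw [mk'_apply, ← QuotientGroup.mk_mul, ← QuotientGroup.mk_mul, QuotientGroup.eq]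
  have : (g * x)⁻¹ * (x * g) = ⁅x⁻¹, g⁻¹⁆ := by group
  rw [this]
  exact commutator_mem_commutator (inv_mem hx) (mem_top _)

def commutatorRightHom {y : G} (hy : y ∈ (⊤ : Subgroup G).lowerCentralSeries d) :
    G →* G ⧸ (⊤ : Subgroup G).lowerCentralSeries (d + 2) :=
  MonoidHom.mk' (fun g => mk' _ ⁅y, g⁆) fun g h => by
    have hcentral := mem_center_iff.mp <|
      mk_mem_center_of_mem_lowerCentralSeries (commutator_mem_commutator hy (mem_top h))
    rw [commutatorElement_mul_right_eq_mul_conj, map_mul, map_mul, map_mul, map_inv,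
      mul_assoc (mk' _ ⁅y, g⁆), hcentral, ← mul_assoc, mul_inv_cancel_right]

def commutatorLeftHom (g : G) :
    (⊤ : Subgroup G).lowerCentralSeries d →* G ⧸ (⊤ : Subgroup G).lowerCentralSeries (d + 2) :=
  MonoidHom.mk' (fun y => mk' _ ⁅(y : G), g⁆) fun y z => by
    have hcentral := mem_center_iff.mp <|
      mk_mem_center_of_mem_lowerCentralSeries (commutator_mem_commutator z.2 (mem_top g))
    rw [Subgroup.coe_mul, commutatorElement_mul_left_eq_conj_mul, map_mul, map_mul, map_mul,
      map_inv, hcentral, mul_inv_cancel_right, hcentral]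

def lcsQuotient.commutatorHom (g : G) :
    lcsQuotient G d →* G ⧸ (⊤ : Subgroup G).lowerCentralSeries (d + 2) :=
  QuotientGroup.lift _ (commutatorLeftHom g) fun _ hz => MonoidHom.mem_ker.mpr <|
    (QuotientGroup.eq_one_iff _).mpr (commutator_mem_commutator (mem_subgroupOf.mp hz) (mem_top g))

theorem map_lowerCentralSeries_succ_le_closure {S : Set G} (hS : Subgroup.closure S = ⊤) :
    ((⊤ : Subgroup G).lowerCentralSeries (d + 1)).map
        (mk' ((⊤ : Subgroup G).lowerCentralSeries (d + 2))) ≤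
      Subgroup.closure (Set.image2 (fun y s => mk' _ ⁅y, s⁆)
        ((⊤ : Subgroup G).lowerCentralSeries d : Set G) S) := by
  rw [map_le_iff_le_comap, Subgroup.lowerCentralSeries_succ, commutator_le]
  intro y hy g _
  have hg : commutatorRightHom hy g ∈ (Subgroup.closure S).map (commutatorRightHom hy) :=
    mem_map_of_mem _ (hS ▸ mem_top g)
  rw [MonoidHom.map_closure] at hg
  refine closure_mono ?_ hg
  rintro _ ⟨s, hs, rfl⟩
  exact ⟨y, hy, s, hs, rfl⟩

theorem map_lowerCentralSeries_one_le_closure {S : Set G} (hS : Subgroup.closure S = ⊤) :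
    ((⊤ : Subgroup G).lowerCentralSeries 1).map (mk' ((⊤ : Subgroup G).lowerCentralSeries 2)) ≤
      Subgroup.closure (Set.image2 (fun s s' => mk' _ ⁅s, s'⁆) S S) := by
  refine (map_lowerCentralSeries_succ_le_closure (d := 0) hS).trans ((closure_le _).mpr ?_)
  rintro _ ⟨x, -, s, hs, rfl⟩
  have hs₀ : s ∈ (⊤ : Subgroup G).lowerCentralSeries 0 := mem_top s
  have hx : commutatorRightHom hs₀ x ∈ (Subgroup.closure S).map (commutatorRightHom hs₀) :=
    mem_map_of_mem _ (hS ▸ mem_top x)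
  rw [MonoidHom.map_closure] at hx
  change mk' _ ⁅x, s⁆ ∈ _
  rw [← commutatorElement_inv, map_inv]
  refine inv_mem (closure_mono ?_ hx)
  rintro _ ⟨s', hs', rfl⟩
  exact ⟨s, hs, s', hs', rfl⟩

theorem finite_lcsQuotient_succ {S : Set G} (hS : Subgroup.closure S = ⊤) (hSfin : S.Finite)
    [Finite (lcsQuotient G d)] : Finite (lcsQuotient G (d + 1)) := by
  have : Finite S := hSfin.to_subtype
  set k := Set.image2 (fun y s => mk' ((⊤ : Subgroup G).lowerCentralSeries (d + 2)) ⁅y, s⁆)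
    ((⊤ : Subgroup G).lowerCentralSeries d : Set G) S
  have hk_fin : k.Finite := by
    refine (Set.finite_range fun p : lcsQuotient G d × S =>
      lcsQuotient.commutatorHom (p.2 : G) p.1).subset ?_
    rintro _ ⟨y, hy, s, hs, rfl⟩
    exact ⟨((⟨y, hy⟩ : (⊤ : Subgroup G).lowerCentralSeries d), ⟨s, hs⟩), rfl⟩
  have hk_comm : ∀ x ∈ k, ∀ x' ∈ k, x * x' = x' * x := by
    rintro _ ⟨y, hy, s, -, rfl⟩ x' -
    exact (mem_center_iff.mp (mk_mem_center_of_mem_lowerCentralSeries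
      (commutator_mem_commutator hy (mem_top s))) x').symm
  have hk_tor : ∀ x ∈ k, IsOfFinOrder x := by
    rintro _ ⟨y, hy, s, -, rfl⟩
    exact (lcsQuotient.commutatorHom s).isOfFinOrder
      (isOfFinOrder_of_finite (QuotientGroup.mk ⟨y, hy⟩ : lcsQuotient G d))
  have := finite_closure_of_isOfFinOrder hk_fin hk_comm hk_tor
  exact finite_quotient_subgroupOf_of_finite_map
    (Finite.Set.subset _ (map_lowerCentralSeries_succ_le_closure hS))

end General

namespace BS

variable {m n : ℤ}

theorem t_inv_mul_a_zpow_mul_t : (t m n)⁻¹ * a m n ^ m * t m n = a m n ^ n := by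
  have h := PresentedGroup.mk_eq_mk_of_mul_inv_mem (rels := BSRels m n)
    (x := (FreeGroup.of 0)⁻¹ * FreeGroup.of 1 ^ m * FreeGroup.of 0) (y := FreeGroup.of 1 ^ n) rfl
  simp only [map_mul, map_inv, map_zpow] at h
  exact h

theorem isOfFinOrder_mk_commutator (h : m ≠ 0 ∨ n ≠ 0) :
    IsOfFinOrder (mk' ((⊤ : Subgroup (BS m n)).lowerCentralSeries 2) ⁅t m n, a m n⁆) := by
  have ht : t m n ∈ (⊤ : Subgroup (BS m n)).lowerCentralSeries 0 := mem_top _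
  have hpow (k : ℤ) : mk' _ ⁅t m n, a m n⁆ ^ k = mk' _ ⁅t m n, a m n ^ k⁆ :=
    (map_zpow (commutatorRightHom ht) (a m n) k).symm
  rw [isOfFinOrder_iff_zpow_eq_one]
  by_cases hnm : n = m
  · subst hnm
    refine ⟨n, by tauto, ?_⟩
    rw [hpow, commutatorElement_eq_one_iff_mul_comm.mpr, map_one]
    conv_lhs => rw [← t_inv_mul_a_zpow_mul_t]
    group
  · refine ⟨n - m, sub_ne_zero.mpr hnm, ?_⟩
    have hcomm : a m n ^ (n - m) = ⁅(t m n)⁻¹, a m n ^ m⁆ := by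
      rw [commutatorElement_def, inv_inv, t_inv_mul_a_zpow_mul_t, zpow_sub]
    have hcentral := mk_mem_center_of_mem_lowerCentralSeries (d := 0)
      (hcomm ▸ commutator_mem_commutator (mem_top _) (mem_top _))
    rw [hpow, map_commutatorElement, commutatorElement_eq_one_iff_mul_comm]
    exact mem_center_iff.mp hcentral _

theorem finite_lcsQuotient_one (h : m ≠ 0 ∨ n ≠ 0) : Finite (lcsQuotient (BS m n) 1) := by
  have hgen : Subgroup.closure (Set.image2 (fun s s' => mk' _ ⁅s, s'⁆)
      (Set.range (PresentedGroup.of : Fin 2 → BS m n)) (Set.range PresentedGroup.of)) ≤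
      zpowers (mk' ((⊤ : Subgroup (BS m n)).lowerCentralSeries 2) ⁅t m n, a m n⁆) := by
    rw [closure_le]
    rintro _ ⟨_, ⟨i, rfl⟩, _, ⟨j, rfl⟩, rfl⟩
    fin_cases i <;> fin_cases j
    · simp only [commutatorElement_self, map_one, SetLike.mem_coe, one_mem]
    · exact mem_zpowers _
    · rw [SetLike.mem_coe, ← commutatorElement_inv, map_inv]
      exact inv_mem (mem_zpowers _)
    · simp only [commutatorElement_self, map_one, SetLike.mem_coe, one_mem]
  have := (isOfFinOrder_mk_commutator h).finite_zpowers.to_subtype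
  exact finite_quotient_subgroupOf_of_finite_map <| Finite.Set.subset _ <|
    (map_lowerCentralSeries_one_le_closure (PresentedGroup.closure_range_of _)).trans hgen

theorem finite_lcsQuotient (h : m ≠ 0 ∨ n ≠ 0) : ∀ d, Finite (lcsQuotient (BS m n) (d + 1))
  | 0 => finite_lcsQuotient_one h
  | d + 1 =>
    have := finite_lcsQuotient h d
    finite_lcsQuotient_succ (PresentedGroup.closure_range_of _) (Set.finite_range _)

end BS

theorem stmt3_general (m n : ℤ) (hm : 0 < m) (c : ℕ) (hc : 2 ≤ c) :
    Finite (((⊤ : Subgroup (BS m n)).lowerCentralSeries (c - 1)) ⧸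
      (((⊤ : Subgroup (BS m n)).lowerCentralSeries c).subgroupOf ((⊤ : Subgroup (BS m n)).lowerCentralSeries (c - 1)))) := by
  obtain ⟨d, rfl⟩ : ∃ d, c = d + 2 := ⟨c - 2, by omega⟩
  exact BS.finite_lcsQuotient (Or.inl hm.ne') d

theorem stmt3 (m n : ℤ) (hm : 0 < m) (hmn : m ≤ |n|) (c : ℕ) (hc : 2 ≤ c) :
    Finite (((⊤ : Subgroup (BS m n)).lowerCentralSeries (c - 1)) ⧸
      (((⊤ : Subgroup (BS m n)).lowerCentralSeries c).subgroupOf ((⊤ : Subgroup (BS m n)).lowerCentralSeries (c - 1)))) :=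
  stmt3_general m n hm c hc
end

section
/- Let G be a finitely generated group. Then the intersection over all prime numbers p of the subgroups (Np)_ω is contained in γ_ω(G); that is, ⋂_{p prime} (Np)_ω ≤ γ_ω(G). -/
/-- `(Np)_ω`: the intersection of all normal subgroups of index a power of `p`. -/
def Npomega (G : Type*) [Group G] (p : ℕ) : Subgroup G :=
  sInf {H : Subgroup G | H.Normal ∧ ∃ k : ℕ, H.index = p ^ k}

open scoped commutatorElement
open QuotientGroup

namespace Subgroup

variable {G : Type*} [Group G]

theorem normal_of_commutator_le {H : Subgroup G} (h : ⁅H, ⊤⁆ ≤ H) : H.Normal where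
  conj_mem n hn g := by
    rw [show g * n * g⁻¹ = ⁅n, g⁆⁻¹ * n by group]
    exact H.mul_mem (H.inv_mem (h (commutator_mem_commutator hn (mem_top g)))) hn

theorem normal_of_le_center {H : Subgroup G} (h : H ≤ center G) : H.Normal :=
  normal_of_commutator_le <| (commutator_eq_bot_iff_le_centralizer.mpr
    (h.trans (center_le_centralizer _))).le.trans bot_le

theorem mem_center_of_closure_eq_top {S : Set G} (hS : closure S = ⊤) {x : G}
    (hx : ∀ s ∈ S, s * x = x * s) : x ∈ center G := by
  rwa [← centralizer_univ, ← coe_top, ← hS, centralizer_closure]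

theorem mem_upperCentralSeriesStep_of_closure_eq_top {S : Set G}
    (hS : closure S = ⊤) {K : Subgroup G} [K.Normal] {x : G} (hx : ∀ s ∈ S, ⁅x, s⁆ ∈ K) :
    x ∈ upperCentralSeriesStep K := by
  rw [upperCentralSeriesStep_eq_comap_center, mem_comap]
  refine mem_center_of_closure_eq_top (S := mk' K '' S)
    (by rw [← MonoidHom.map_closure, hS, map_top_of_surjective _ (mk'_surjective K)]) ?_
  rintro _ ⟨s, hs, rfl⟩
  have : ⁅mk' K x, mk' K s⁆ = 1 := by
    rw [← map_commutatorElement, MonoidHom.mem_ker.mp (by rw [ker_mk']; exact hx s hs)]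
  exact (commutatorElement_eq_one_iff_mul_comm.mp this).symm

def leftNormedCommutators (S : Set G) : ℕ → Set G
  | 0 => S
  | n + 1 => Set.image2 (⁅·, ·⁆) (leftNormedCommutators S n) S

theorem finite_leftNormedCommutators {S : Set G} (hS : S.Finite) :
    ∀ n, (leftNormedCommutators S n).Finite
  | 0 => hS
  | n + 1 => (finite_leftNormedCommutators hS n).image2 _ hS

theorem leftNormedCommutators_subset_lowerCentralSeries (S : Set G) :
    ∀ n, leftNormedCommutators S n ⊆ (⊤ : Subgroup G).lowerCentralSeries n
  | 0 => fun x _ => mem_top x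
  | n + 1 => by
    rintro _ ⟨t, ht, s, -, rfl⟩
    exact commutator_mem_commutator (leftNormedCommutators_subset_lowerCentralSeries S n ht)
      (mem_top s)

theorem lowerCentralSeries_eq_closure_leftNormedCommutators_sup {S : Set G}
    (hS : closure S = ⊤) (n : ℕ) :
    (⊤ : Subgroup G).lowerCentralSeries n =
      closure (leftNormedCommutators S n) ⊔ (⊤ : Subgroup G).lowerCentralSeries (n + 1) := by
  set γ := (⊤ : Subgroup G).lowerCentralSeries
  have hle : ∀ n, closure (leftNormedCommutators S n) ⊔ γ (n + 1) ≤ γ n := fun n =>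
    sup_le ((closure_le _).mpr (leftNormedCommutators_subset_lowerCentralSeries S n))
      (lowerCentralSeries_antitone _ n.le_succ)
  induction n with
  | zero => exact le_antisymm (by simp [leftNormedCommutators, hS]) (hle 0)
  | succ n ih =>
    refine le_antisymm ?_ (hle _)
    set K := closure (leftNormedCommutators S (n + 1)) ⊔ γ (n + 2)
    have : K.Normal :=
      normal_of_commutator_le ((commutator_mono (hle _) le_rfl).trans le_sup_right)
    have hγn : γ n ≤ upperCentralSeriesStep K := by
      rw [ih]
      refine sup_le ((closure_le _).mpr fun x hx => ?_) fun y hy g => ?_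
      · exact mem_upperCentralSeriesStep_of_closure_eq_top hS fun s hs =>
          mem_sup_left (subset_closure ⟨x, hx, s, hs, rfl⟩)
      · exact mem_sup_right (commutator_mem_commutator hy (mem_top g))
    exact commutator_le.mpr fun g₁ h₁ g₂ _ => hγn h₁ g₂

theorem fg_lowerCentralSeries [Group.FG G] [Group.IsNilpotent G] (n : ℕ) :
    ((⊤ : Subgroup G).lowerCentralSeries n).FG := by
  obtain ⟨S, hS, hSfin⟩ := Group.fg_iff.mp ‹_›
  obtain ⟨c, hc⟩ := nilpotent_iff_lowerCentralSeries.mp ‹Group.IsNilpotent G›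
  suffices ∀ k n, c ≤ n + k → ((⊤ : Subgroup G).lowerCentralSeries n).FG from this c n (by omega)
  intro k
  induction k with
  | zero =>
    intro n hn
    have : (⊤ : Subgroup G).lowerCentralSeries n ≤ ⊥ := hc ▸ lowerCentralSeries_antitone _ hn
    exact le_bot_iff.mp this ▸ FG.bot
  | succ k ih =>
    intro n hn
    rw [lowerCentralSeries_eq_closure_leftNormedCommutators_sup hS n]
    exact ((fg_iff _).mpr ⟨_, rfl, finite_leftNormedCommutators hSfin n⟩).sup
      (ih (n + 1) (by omega))

theorem fg_of_fg_map_of_fg_inf_ker {G' : Type*} [Group G'] (f : G →* G') {H : Subgroup G}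
    (hmap : (H.map f).FG) (hker : (H ⊓ f.ker).FG) : H.FG := by
  obtain ⟨S, hS, hSfin⟩ := (fg_iff _).mp hker
  obtain ⟨T', hT', hT'fin⟩ := (fg_iff _).mp hmap
  obtain ⟨T, hTH, hTfin, hT⟩ :=
    (Set.exists_subset_image_finite_and (p := fun T => closure T = H.map f)).mp
      ⟨T', (subset_closure.trans hT'.le : T' ⊆ H.map f), hT'fin, hT'⟩
  refine (fg_iff _).mpr ⟨S ∪ T, le_antisymm ?_ ?_, hSfin.union hTfin⟩
  · rw [closure_le]
    exact Set.union_subset ((hS ▸ subset_closure).trans inf_le_left) hTH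
  · intro h hh
    obtain ⟨u, hu, hfu⟩ : f h ∈ (closure T).map f := by
      rw [MonoidHom.map_closure, hT]; exact mem_map_of_mem f hh
    have huH : u ∈ H := (closure_le H).mpr hTH hu
    have hker' : h * u⁻¹ ∈ closure S := hS ▸ ⟨H.mul_mem hh (H.inv_mem huH), by simp [hfu]⟩
    simpa using mul_mem (closure_mono Set.subset_union_left hker')
      (closure_mono Set.subset_union_right hu)

theorem fg_of_commGroup {A : Type*} [CommGroup A] [Group.FG A] (K : Subgroup A) : K.FG := by
  have : IsNoetherian ℤ (Additive A) := isNoetherian_of_isNoetherianRing_of_finite ℤ _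
  have h := IsNoetherian.noetherian (AddSubgroup.toIntSubmodule K.toAddSubgroup)
  rwa [Submodule.fg_iff_addSubgroup_fg, AddSubgroup.toIntSubmodule_toAddSubgroup,
    ← fg_iff_add_fg] at h

open scoped IsMulCommutative in
theorem FG.of_le_of_le_center {A B : Subgroup G} (hA : A.FG) (hAc : A ≤ center G) (hBA : B ≤ A) :
    B.FG := by
  classical
  have : IsMulCommutative A :=
    le_centralizer_iff_isMulCommutative.mp (hAc.trans (center_le_centralizer (A : Set G)))
  have : Group.FG A := (Group.fg_iff_subgroup_fg A).mpr hA
  obtain ⟨S, hS⟩ := fg_of_commGroup (B.subgroupOf A)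
  exact ⟨S.image A.subtype, by rw [Finset.coe_image, ← MonoidHom.map_closure, hS,
    subgroupOf_map_subtype, inf_of_le_left hBA]⟩

theorem lowerCentralSeries_quotient_lowerCentralSeries (n : ℕ) :
    (⊤ : Subgroup (G ⧸ (⊤ : Subgroup G).lowerCentralSeries n)).lowerCentralSeries n = ⊥ := by
  rw [← map_top_of_surjective _ (mk'_surjective _), ← map_lowerCentralSeries, map_eq_bot_iff,
    ker_mk']

instance isNilpotent_quotient_lowerCentralSeries (n : ℕ) :
    Group.IsNilpotent (G ⧸ (⊤ : Subgroup G).lowerCentralSeries n) :=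
  nilpotent_iff_lowerCentralSeries.mpr ⟨n, lowerCentralSeries_quotient_lowerCentralSeries n⟩

theorem fg_of_isNilpotent [Group.FG G] [Group.IsNilpotent G] (H : Subgroup G) : H.FG := by
  obtain ⟨c, hc⟩ := nilpotent_iff_lowerCentralSeries.mp ‹Group.IsNilpotent G›
  induction c generalizing G with
  | zero => exact (eq_bot_iff.mpr (hc ▸ le_top : H ≤ ⊥)) ▸ FG.bot
  | succ c ih =>
    set A := (⊤ : Subgroup G).lowerCentralSeries c
    have hAc : A ≤ center G := by
      rw [← centralizer_univ, ← coe_top, ← commutator_eq_bot_iff_le_centralizer]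
      exact hc
    refine fg_of_fg_map_of_fg_inf_ker (mk' A)
      (ih _ (lowerCentralSeries_quotient_lowerCentralSeries c)) ?_
    rw [ker_mk']
    exact (fg_lowerCentralSeries c).of_le_of_le_center hAc inf_le_right

end Subgroup

namespace Group
open Subgroup
variable {G : Type*} [Group G]

theorem finite_upperCentralSeriesStep_center [Group.FG G] [Finite (center G)] :
    Finite (center G).upperCentralSeriesStep := by
  classical
  obtain ⟨S, hS, hSfin⟩ := Group.fg_iff.mp ‹_›
  have := hSfin.to_subtype
  set U := (center G).upperCentralSeriesStep
  let f : U → S → center G := fun u s => ⟨⁅(u : G), s⁆, u.2 s⟩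
  have hf : ∀ u v, f u = f v → (v : G)⁻¹ * u ∈ center G := by
    refine fun u v huv => mem_center_of_closure_eq_top hS fun s hs => ?_
    have : ⁅(u : G), s⁆ = ⁅(v : G), s⁆ := congrArg Subtype.val (congrFun huv ⟨s, hs⟩)
    simp only [commutatorElement_def, mul_left_inj] at this
    calc s * ((v : G)⁻¹ * u) = (v : G)⁻¹ * ((v : G) * s * (v : G)⁻¹) * u := by group
      _ = (v : G)⁻¹ * u * s := by rw [← this]; group
  let r := Function.invFun f
  -- `r (f u)` depends only on `f u`, so `u` is recovered from `f u` and `(r (f u))⁻¹ * u`.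
  refine Finite.of_injective (fun u => (f u,
    (⟨_, hf u (r (f u)) (Function.invFun_eq ⟨u, rfl⟩).symm⟩ : center G))) ?_
  intro u v huv
  simp only [Prod.mk.injEq, Subtype.mk.injEq] at huv
  obtain ⟨h1, h2⟩ := huv
  rw [h1, mul_right_inj] at h2
  exact Subtype.ext h2

theorem finite_of_finite_center [IsNilpotent G] [Group.FG G] [Finite (center G)] : Finite G := by
  refine nilpotent_center_quotient_ind
    (P := fun G _ _ => Group.FG G → Finite (center G) → Finite G) G
    (fun G _ _ _ _ => inferInstance) (fun G _ _ ih _ _ => ?_) ‹_› ‹_›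
  have : Finite (center (G ⧸ center G)) := by
    have := finite_upperCentralSeriesStep_center (G := G)
    rw [Subgroup.upperCentralSeriesStep_eq_comap_center] at this
    refine Set.Finite.to_subtype (s := (center (G ⧸ center G) : Set (G ⧸ center G))) ?_
    rw [← map_comap_eq_self_of_surjective (mk'_surjective (center G)) (center _), coe_map]
    exact (Set.toFinite _).image _
  have := ih inferInstance this
  exact Finite.of_subgroup_quotient (center G)

theorem isOfFinOrder_of_forall_normal_ne_bot_mem {a : G} (ha : a ≠ 1)
    (hmono : ∀ N : Subgroup G, N.Normal → N ≠ ⊥ → a ∈ N) {z : G} (hz : z ∈ center G) :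
    IsOfFinOrder z := by
  by_contra hz'
  have hinj := injective_zpow_iff_not_isOfFinOrder.mpr hz'
  have key : ∀ k : ℤ, k ≠ 0 → ∃ j : ℤ, z ^ (k * j) = a := fun k hk => by
    have hN : (zpowers (z ^ k)).Normal := normal_of_le_center (zpowers_le.mpr (zpow_mem hz k))
    have hne : zpowers (z ^ k) ≠ ⊥ := by
      rw [Ne, zpowers_eq_bot, ← zpow_zero z]
      exact hk ∘ @hinj k 0
    obtain ⟨j, hj⟩ := mem_zpowers_iff.mp (hmono _ hN hne)
    exact ⟨j, by rw [zpow_mul, hj]⟩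
  obtain ⟨j₁, hj₁⟩ := key 1 one_ne_zero
  have hj₁0 : j₁ ≠ 0 := by rintro rfl; exact ha (by simpa using hj₁.symm)
  obtain ⟨j₂, hj₂⟩ := key (2 * j₁) (by omega)
  -- `z ^ (2 * j₁ * j₂) = a = z ^ (1 * j₁)` forces `2 * j₂ = 1`.
  have h := hinj (hj₂.trans hj₁.symm)
  have : j₁ * (2 * j₂ - 1) = 0 := by linarith
  rcases mul_eq_zero.mp this with h | h <;> omega

open scoped IsMulCommutative in
theorem finite_of_forall_normal_ne_bot_mem [IsNilpotent G] [Group.FG G] {a : G} (ha : a ≠ 1)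
    (hmono : ∀ N : Subgroup G, N.Normal → N ≠ ⊥ → a ∈ N) : Finite G := by
  have : Group.FG (center G) := (Group.fg_iff_subgroup_fg _).mpr (fg_of_isNilpotent _)
  have : Finite (center G) := CommGroup.finite_of_fg_isMulTorsion (center G) fun z =>
    Submonoid.isOfFinOrder_coe.mp (isOfFinOrder_of_forall_normal_ne_bot_mem ha hmono z.2)
  exact finite_of_finite_center

theorem exists_maximal_normal_notMem {x : G} (hx : x ≠ 1) :
    ∃ N : Subgroup G, Maximal (fun N : Subgroup G => N.Normal ∧ x ∉ N) N := by
  set s := {N : Subgroup G | N.Normal ∧ x ∉ N}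
  have hchain : ∀ c ⊆ s, IsChain (· ≤ ·) c → ∀ N ∈ c, ∃ ub ∈ s, ∀ M ∈ c, M ≤ ub := by
    intro c hcs hc N hN
    have : ∀ M : c, (M : Subgroup G).Normal := fun M => (hcs M.2).1
    have : Nonempty c := ⟨⟨N, hN⟩⟩
    refine ⟨⨆ M : c, (M : Subgroup G), ⟨inferInstance, fun hx' => ?_⟩,
      fun M hM => le_iSup (fun M : c => (M : Subgroup G)) ⟨M, hM⟩⟩
    obtain ⟨M, hM⟩ := (mem_iSup_of_directed hc.directed).mp hx'
    exact (hcs M.2).2 hM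
  obtain ⟨N, -, hN⟩ := zorn_le_nonempty₀ s hchain ⊥ ⟨inferInstance, by simpa using hx⟩
  exact ⟨N, hN⟩

instance residuallyFinite_of_isNilpotent [IsNilpotent G] [Group.FG G] : ResiduallyFinite G := by
  refine residuallyFinite_iff_exists_finiteIndex.mpr fun x hx => ?_
  obtain ⟨N, ⟨hN, hxN⟩, hNmax⟩ := exists_maximal_normal_notMem hx
  refine ⟨N, ?_, hxN⟩
  have : Finite (G ⧸ N) := by
    refine finite_of_forall_normal_ne_bot_mem (a := (x : G ⧸ N)) (by simpa using hxN)
      fun P hP hPbot => ?_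
    by_contra hxP
    have hle : P.comap (mk' N) ≤ N :=
      hNmax ⟨hP.comap _, hxP⟩ fun n hn => by simp [(QuotientGroup.eq_one_iff n).mpr hn]
    refine hPbot ?_
    rw [← map_comap_eq_self_of_surjective (mk'_surjective N) P, Subgroup.map_eq_bot_iff, ker_mk']
    exact hle
  exact finiteIndex_of_finite_quotient

end Group

theorem IsPGroup.pi {p : ℕ} [Fact p.Prime] {ι : Type*} [Finite ι] {P : ι → Type*}
    [∀ i, Group (P i)] [∀ i, Finite (P i)] (h : ∀ i, IsPGroup p (P i)) : IsPGroup p (∀ i, P i) := by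
  have := Fintype.ofFinite ι
  choose n hn using fun i => IsPGroup.iff_card.mp (h i)
  refine .of_card (n := ∑ i, n i) ?_
  rw [Nat.card_pi, ← Finset.prod_pow_eq_pow_sum]
  exact Finset.prod_congr rfl fun i _ => hn i

theorem npomega_le_comap {G H : Type*} [Group G] [Group H] {f : G →* H}
    (hf : Function.Surjective f) (p : ℕ) : Npomega G p ≤ (Npomega H p).comap f := by
  intro x hx
  rw [Subgroup.mem_comap, Npomega, Subgroup.mem_sInf]
  rintro N ⟨hN, k, hk⟩
  exact (Subgroup.mem_sInf.mp hx) (N.comap f)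
    ⟨hN.comap f, k, by rw [Subgroup.index_comap_of_surjective _ hf, hk]⟩

theorem exists_prime_notMem_npomega {F : Type*} [Group F] [Finite F] [Group.IsNilpotent F]
    {y : F} (hy : y ≠ 1) : ∃ p, p.Prime ∧ y ∉ Npomega F p := by
  obtain ⟨e⟩ := (Group.isNilpotent_of_finite_tfae (G := F)).out 0 4 |>.mp ‹_›
  obtain ⟨p, hp⟩ := Function.ne_iff.mp (by simpa using hy : e.symm y ≠ 1)
  have : Fact p.1.Prime := ⟨Nat.prime_of_mem_primeFactors p.2⟩
  let φ := (Pi.evalMonoidHom _ p).comp e.symm.toMonoidHom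
  have hφ : Function.Surjective φ := (Function.surjective_eval p).comp e.symm.surjective
  obtain ⟨k, hk⟩ := IsPGroup.iff_card.mp (IsPGroup.pi fun P : Sylow p F => P.isPGroup')
  refine ⟨p, this.out, fun hyp => hp ?_⟩
  refine (Subgroup.mem_sInf.mp hyp) φ.ker ⟨inferInstance, k, ?_⟩
  rw [Subgroup.index_ker, MonoidHom.range_eq_top.mpr hφ, Subgroup.card_top, hk]

open Subgroup in
theorem iInf_npomega_eq_bot {G : Type*} [Group G] [Group.FG G] [Group.IsNilpotent G] :
    ⨅ (p : ℕ) (_ : p.Prime), Npomega G p = ⊥ := by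
  refine eq_bot_iff.mpr fun x hx => ?_
  by_contra hx1
  obtain ⟨N, hxN⟩ := Group.exists_finiteIndexNormalSubgroup_notMem x hx1
  obtain ⟨p, hp, hpN⟩ := exists_prime_notMem_npomega (y := (x : G ⧸ N.toSubgroup))
    (by simpa [FiniteIndexNormalSubgroup.mem_toSubgroup_iff] using hxN)
  exact hpN (npomega_le_comap (mk'_surjective _) p (mem_iInf.mp (mem_iInf.mp hx p) hp))

theorem stmt7 {G : Type*} [Group G] (hG : Group.FG G) :
    (⨅ (p : ℕ) (_ : p.Prime), Npomega G p) ≤ lcsOmega G := by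
  intro x hx
  rw [lcsOmega, Subgroup.mem_iInf]
  intro c
  set L := (⊤ : Subgroup G).lowerCentralSeries c
  have hcomap : (⨅ (p : ℕ) (_ : p.Prime), Npomega G p) ≤
      (⨅ (p : ℕ) (_ : p.Prime), Npomega (G ⧸ L) p).comap (mk' L) := by
    simp only [Subgroup.comap_iInf]
    exact iInf₂_mono fun p _ => npomega_le_comap (mk'_surjective L) p
  rw [iInf_npomega_eq_bot (G := G ⧸ L), MonoidHom.comap_bot, ker_mk'] at hcomap
  exact hcomap hx
end

section
/- Let G = BS(m,n) be the Baumslag–Solitar group with 0 < m ≤ |n| and gcd(m,n) = 1. If n is not congruent to m modulo p for any prime number p, then γ_ω(G) equals the normal closure in G of the element a. -/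
/-!
The arithmetic hypotheses force `n = m + 1`: no prime divides `n - m`, so `n = m ± 1`, and
`m ≤ |m - 1|` is impossible for `m > 0`. In `BS(m, m + 1)` the relation `t⁻¹ aᵐ t = aᵐ a` makes `a`
a commutator of `a⁻ᵐ` with `t⁻¹`, so `a` lies in every term of the lower central series.
Conversely, `BS(m, n)` modulo the normal closure of `a` is generated by the image of `t`, hence
cyclic and abelian, so already `γ₂` lies in that normal closure.
-/

open scoped commutatorElement

instance lcsOmega_characteristic (G : Type*) [Group G] : (lcsOmega G).Characteristic := by
  unfold lcsOmega
  infer_instance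

theorem lcsOmega_le_commutator (G : Type*) [Group G] : lcsOmega G ≤ commutator G :=
  (iInf_le _ 1).trans (Subgroup.top_lowerCentralSeries_one).le

theorem mem_lcsOmega_of_eq_commutatorElement {G : Type*} [Group G] {x g : G} {k : ℤ}
    (h : x = ⁅x ^ k, g⁆) : x ∈ lcsOmega G := by
  refine Subgroup.mem_iInf.mpr fun c => ?_
  induction c with
  | zero => exact Subgroup.mem_top x
  | succ c ih =>
    rw [Subgroup.lowerCentralSeries_succ, h]
    exact Subgroup.commutator_mem_commutator (Subgroup.zpow_mem _ ih k) (Subgroup.mem_top g)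

theorem Int.natAbs_sub_eq_one_of_forall_prime_not_modEq {m n : ℤ}
    (h : ∀ p : ℕ, p.Prime → ¬ n ≡ m [ZMOD p]) : (m - n).natAbs = 1 :=
  Nat.eq_one_iff_not_exists_prime_dvd.mpr fun p hp hdvd =>
    h p hp (Int.modEq_iff_dvd.mpr (Int.natCast_dvd.mpr hdvd))

namespace BS

theorem inv_t_mul_a_zpow_mul_t (m n : ℤ) : (t m n)⁻¹ * a m n ^ m * t m n = a m n ^ n := by
  have hrel : PresentedGroup.mk (BSRels m n) ((FreeGroup.of 0)⁻¹ * FreeGroup.of 1 ^ m *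
      FreeGroup.of 0 * (FreeGroup.of 1 ^ n)⁻¹) = 1 :=
    (QuotientGroup.eq_one_iff _).mpr (Subgroup.subset_normalClosure rfl)
  simp only [map_mul, map_inv, map_zpow] at hrel
  exact mul_inv_eq_one.mp hrel

theorem a_eq_commutatorElement (m : ℤ) :
    a m (m + 1) = ⁅a m (m + 1) ^ (-m), (t m (m + 1))⁻¹⁆ := by
  have hrel : (t m (m + 1))⁻¹ * a m (m + 1) ^ m * t m (m + 1) = a m (m + 1) ^ m * a m (m + 1) := by
    rw [inv_t_mul_a_zpow_mul_t, zpow_add_one]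
  rw [commutatorElement_def, zpow_neg, inv_inv, inv_inv, mul_assoc, mul_assoc,
    ← mul_assoc (t _ _)⁻¹, hrel]
  group

instance isCyclic_quotient_normalClosure_a (m n : ℤ) :
    IsCyclic (BS m n ⧸ Subgroup.normalClosure {a m n}) := by
  set π := QuotientGroup.mk' (Subgroup.normalClosure {a m n})
  refine ⟨π (t m n), fun y => ?_⟩
  obtain ⟨x, rfl⟩ := QuotientGroup.mk'_surjective _ y
  have hgen : x ∈ (Subgroup.zpowers (π (t m n))).comap π := by
    refine PresentedGroup.generated_by _ _ (fun j => ?_) x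
    fin_cases j
    · exact Subgroup.mem_zpowers _
    · have ha : π (a m n) = 1 :=
        (QuotientGroup.eq_one_iff _).mpr (Subgroup.subset_normalClosure rfl)
      exact Subgroup.mem_comap.mpr (ha ▸ one_mem _)
  exact Subgroup.mem_zpowers_iff.mp hgen

end BS

theorem stmt12_general (m n : ℤ) (hm : 0 < m) (hmn : m ≤ |n|)
    (hcong : ∀ p : ℕ, p.Prime → ¬ (n ≡ m [ZMOD (p : ℤ)])) :
    lcsOmega (BS m n) = Subgroup.normalClosure {BS.a m n} := by
  have habs := Int.natAbs_sub_eq_one_of_forall_prime_not_modEq hcong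
  obtain rfl : n = m + 1 := by
    rcases abs_cases n with ⟨hn, _⟩ | ⟨hn, _⟩ <;> omega
  refine le_antisymm ?_ ?_
  · calc lcsOmega _ ≤ commutator _ := lcsOmega_le_commutator _
      _ ≤ _ := Subgroup.Normal.quotient_commutative_iff_commutator_le.mp inferInstance
  · exact Subgroup.normalClosure_le_normal <| Set.singleton_subset_iff.mpr <|
      mem_lcsOmega_of_eq_commutatorElement (BS.a_eq_commutatorElement m)

theorem stmt12 (m n : ℤ) (hm : 0 < m) (hmn : m ≤ |n|) (hgcd : Int.gcd m n = 1)
    (hcong : ∀ p : ℕ, p.Prime → ¬ (n ≡ m [ZMOD (p : ℤ)])) :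
    lcsOmega (BS m n) = Subgroup.normalClosure {BS.a m n} :=
  stmt12_general m n hm hmn hcong
end

section
/- Let G = BS(m,n) be the Baumslag–Solitar group with 0 < m ≤ |n|, let d = gcd(m,n), and let μ, ν be positive integers with 1 ≤ μ, ν ≤ d, gcd(μ,ν) = 1 and μ·ν = d. Then [t^{-k} a^μ t^k, a^ν] ∈ γ_ω(G) for all k ∈ ℤ. -/
/-!
Write `c_j = [t^{-j} a^μ t^j, a^ν]` and induct along the lower central series: if every `c_j`
lies in `γ_i`, all of them are central in `Q = G/γ_{i+1}`, where powers can be moved in and out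
of the commutators. With `m = μν m₁` and `n = μν n₁`, the relation
`(t^{-(j+1)} a t^{j+1})^m = (t^{-j} a t^j)^n` gives `c_{j+1}^{ν m₁} = c_j^{ν n₁}` and
`c_{j+1}^{μ n₁} = c_j^{μ m₁}`. As `c_0 = 1`, a prime `p` dividing the order of `c_k` divides
`ν² m₁ n₁` and `μ² m₁ n₁`, hence exactly one of `m₁, n₁`. So `m ≠ n`, and `a` has finite order
in `Q` because `a^{(n-m)^i} ∈ γ_i`. Since `c_k` is a commutator of conjugates of `a^μ` and `a^ν`,
`p` divides the orders of `a^μ` and `a^ν`, hence that of `y = a^{μν}`. But `y^{m₁} = a^m` and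
`y^{n₁} = a^n` are conjugate, and their orders cannot agree when `p` divides exactly one of the
exponents.
-/

open Subgroup

section Commutator

variable {G H : Type*} [Group G] [Group H]

theorem inv_conj_zpow (g x : G) (p : ℤ) : (g⁻¹ * x * g) ^ p = g⁻¹ * x ^ p * g := by
  simpa using conj_zpow (a := g⁻¹) (b := x) (i := p)

theorem map_commElt {F : Type*} [FunLike F G H] [MonoidHomClass F G H] (f : F) (x y : G) :
    f (commElt x y) = commElt (f x) (f y) := by
  simp only [commElt, map_mul, map_inv]

theorem commElt_inv_conj (g x y : G) :
    commElt (g⁻¹ * x * g) (g⁻¹ * y * g) = g⁻¹ * commElt x y * g := by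
  simp only [commElt]; group

theorem commElt_inv (x y : G) : (commElt x y)⁻¹ = commElt y x := by
  simp only [commElt]; group

theorem Commute.commElt_eq_one {x y : G} (h : Commute x y) : commElt x y = 1 := by
  rw [commElt, mul_assoc, mul_assoc, h.eq, inv_mul_cancel_left, inv_mul_cancel]

theorem commElt_one_left (y : G) : commElt 1 y = 1 :=
  (Commute.one_left y).commElt_eq_one

theorem commElt_one_right (x : G) : commElt x 1 = 1 :=
  (Commute.one_right x).commElt_eq_one

theorem commElt_zpow_left_of_mem_center {x y : G} (hc : commElt x y ∈ center G) (p : ℤ) :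
    commElt (x ^ p) y = commElt x y ^ p := by
  have hconj : y⁻¹ * x * y = x * commElt x y := by simp only [commElt]; group
  have hcomm : Commute x (commElt x y) := (mem_center_iff.mp hc x)
  calc commElt (x ^ p) y = (x ^ p)⁻¹ * (y⁻¹ * x ^ p * y) := by simp only [commElt]; group
    _ = (x ^ p)⁻¹ * (y⁻¹ * x * y) ^ p := by rw [inv_conj_zpow]
    _ = commElt x y ^ p := by rw [hconj, hcomm.mul_zpow, inv_mul_cancel_left]

theorem commElt_zpow_right_of_mem_center {x y : G} (hc : commElt x y ∈ center G) (q : ℤ) :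
    commElt x (y ^ q) = commElt x y ^ q := by
  have hc' : commElt y x ∈ center G := commElt_inv x y ▸ inv_mem hc
  rw [← commElt_inv, commElt_zpow_left_of_mem_center hc', ← commElt_inv, inv_zpow, inv_inv]

theorem orderOf_commElt_dvd_orderOf_left {x y : G} (hc : commElt x y ∈ center G) :
    orderOf (commElt x y) ∣ orderOf x :=
  orderOf_dvd_of_pow_eq_one <| by
    rw [← zpow_natCast, ← commElt_zpow_left_of_mem_center hc, zpow_natCast, pow_orderOf_eq_one,
      commElt_one_left]

theorem orderOf_commElt_dvd_orderOf_right {x y : G} (hc : commElt x y ∈ center G) :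
    orderOf (commElt x y) ∣ orderOf y :=
  orderOf_dvd_of_pow_eq_one <| by
    rw [← zpow_natCast, ← commElt_zpow_right_of_mem_center hc, zpow_natCast, pow_orderOf_eq_one,
      commElt_one_right]

end Commutator

section OrderOf

variable {G : Type*} [Group G]

theorem orderOf_dvd_natAbs_mul_orderOf_zpow (x : G) (w : ℤ) :
    orderOf x ∣ w.natAbs * orderOf (x ^ w) := by
  rw [← Int.natAbs_natCast (orderOf (x ^ w)), ← Int.natAbs_mul, ← Int.natCast_dvd,
    orderOf_dvd_iff_zpow_eq_one, zpow_mul, zpow_natCast, pow_orderOf_eq_one]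

theorem Nat.Prime.dvd_orderOf_zpow {x : G} {p : ℕ} (hp : p.Prime) (hpx : p ∣ orderOf x) {w : ℤ}
    (hw : ¬ (p : ℤ) ∣ w) : p ∣ orderOf (x ^ w) :=
  (hp.dvd_mul.mp (hpx.trans (orderOf_dvd_natAbs_mul_orderOf_zpow x w))).resolve_left
    (by rwa [← Int.natCast_dvd])

theorem Nat.Prime.dvd_orderOf_zpow_mul {x : G} {p : ℕ} (hp : p.Prime) {μ ν : ℤ}
    (hμ : p ∣ orderOf (x ^ μ)) (hν : p ∣ orderOf (x ^ ν)) (hμν : ¬ ((p : ℤ) ∣ μ ∧ (p : ℤ) ∣ ν)) :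
    p ∣ orderOf (x ^ (μ * ν)) := by
  by_cases hpν : (p : ℤ) ∣ ν
  · rw [mul_comm, zpow_mul]
    exact hp.dvd_orderOf_zpow hν fun hpμ => hμν ⟨hpμ, hpν⟩
  · rw [zpow_mul]
    exact hp.dvd_orderOf_zpow hμ hpν

theorem orderOf_zpow_ne_of_prime_dvd {y : G} {p : ℕ} (hp : p.Prime) (hy : orderOf y ≠ 0)
    (hpy : p ∣ orderOf y) {u w : ℤ} (hu : (p : ℤ) ∣ u) (hw : ¬ (p : ℤ) ∣ w) :
    orderOf (y ^ u) ≠ orderOf (y ^ w) := by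
  intro h
  obtain ⟨N, hN⟩ := hpy
  obtain ⟨u', rfl⟩ := hu
  have hu_dvd : orderOf (y ^ ((p : ℤ) * u')) ∣ N := by
    refine orderOf_dvd_of_pow_eq_one ?_
    rw [← zpow_natCast, ← zpow_mul, ← orderOf_dvd_iff_zpow_eq_one]
    exact ⟨u', by rw [hN]; push_cast; ring⟩
  have hpw : Nat.Coprime (p ^ (orderOf y).factorization p) w.natAbs :=
    Nat.Coprime.pow_left _ (hp.coprime_iff_not_dvd.mpr (by rwa [← Int.natCast_dvd]))
  have hw_dvd : p ^ (orderOf y).factorization p ∣ orderOf (y ^ w) :=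
    hpw.dvd_of_dvd_mul_left ((Nat.ordProj_dvd _ p).trans (orderOf_dvd_natAbs_mul_orderOf_zpow y w))
  refine Nat.pow_succ_factorization_not_dvd hy hp ?_
  calc p ^ ((orderOf y).factorization p + 1) = p * p ^ (orderOf y).factorization p := pow_succ' _ _
    _ ∣ p * N := Nat.mul_dvd_mul_left p ((hw_dvd.trans h.symm.dvd).trans hu_dvd)
    _ = orderOf y := hN.symm

theorem orderOf_dvd_of_zpow_succ_eq {f : ℤ → G} {u v : ℤ} (h0 : f 0 = 1)
    (h : ∀ j, f (j + 1) ^ u = f j ^ v) (k : ℤ) : orderOf (f k) ∣ (u * v).natAbs ^ k.natAbs := by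
  rw [← Int.natAbs_pow, ← Int.natCast_dvd, orderOf_dvd_iff_zpow_eq_one]
  induction k using Int.induction_on with
  | zero => simp [h0]
  | succ i ih =>
    rw [Int.natAbs_natCast] at ih
    rw [show ((i : ℤ) + 1).natAbs = i + 1 by omega,
      show (u * v) ^ (i + 1) = u * (v * (u * v) ^ i) by ring, zpow_mul, h, ← zpow_mul,
      show v * (v * (u * v) ^ i) = (u * v) ^ i * (v * v) by ring, zpow_mul, ih,
      one_zpow]
  | pred i ih =>
    rw [Int.natAbs_neg, Int.natAbs_natCast] at ih
    have hi := h (-i - 1)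
    rw [sub_add_cancel] at hi
    rw [show (-(i : ℤ) - 1).natAbs = i + 1 by omega,
      show (u * v) ^ (i + 1) = v * (u * (u * v) ^ i) by ring, zpow_mul, ← hi, ← zpow_mul,
      show u * (u * (u * v) ^ i) = (u * v) ^ i * (u * u) by ring, zpow_mul,
      ih, one_zpow]

end OrderOf

section LowerCentralSeries

variable {G : Type*} [Group G]

theorem mk_mem_center_of_mem_lowerCentralSeries_s13 {i : ℕ} {g : G}
    (hg : g ∈ (⊤ : Subgroup G).lowerCentralSeries i) :
    (g : G ⧸ (⊤ : Subgroup G).lowerCentralSeries (i + 1)) ∈ center _ := by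
  rw [mem_center_iff]
  intro q
  induction q using QuotientGroup.induction_on with
  | H h =>
    rw [← QuotientGroup.mk_mul, ← QuotientGroup.mk_mul, QuotientGroup.eq,
      Subgroup.lowerCentralSeries_succ]
    convert commutator_mem_commutator (inv_mem hg) (mem_top h⁻¹) using 1
    simp only [commutatorElement_def]; group

theorem zpow_sub_mem_lowerCentralSeries_succ {t x : G} {m n : ℤ} {i : ℕ}
    (hrel : t⁻¹ * x ^ m * t = x ^ n) (hx : x ∈ (⊤ : Subgroup G).lowerCentralSeries i) :
    x ^ (n - m) ∈ (⊤ : Subgroup G).lowerCentralSeries (i + 1) := by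
  rw [← QuotientGroup.eq_one_iff, QuotientGroup.mk_zpow, zpow_sub, mul_inv_eq_one]
  have hcomm := mem_center_iff.mp (zpow_mem (mk_mem_center_of_mem_lowerCentralSeries_s13 hx) m)
    (t : G ⧸ (⊤ : Subgroup G).lowerCentralSeries (i + 1))
  rw [← QuotientGroup.mk_zpow, ← hrel, QuotientGroup.mk_mul, QuotientGroup.mk_mul,
    QuotientGroup.mk_inv, QuotientGroup.mk_zpow, mul_assoc, ← hcomm, inv_mul_cancel_left]

theorem conj_zpow_of_conj_eq {t a : G} {m n : ℤ} (hrel : t⁻¹ * a ^ m * t = a ^ n) (e : ℤ) :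
    t⁻¹ * (a ^ e) ^ m * t = (a ^ e) ^ n := by
  rw [← zpow_mul, mul_comm, zpow_mul, ← inv_conj_zpow, hrel, ← zpow_mul, ← zpow_mul, mul_comm]

theorem zpow_pow_sub_mem_lowerCentralSeries {t a : G} {m n : ℤ}
    (hrel : t⁻¹ * a ^ m * t = a ^ n) (i : ℕ) :
    a ^ ((n - m) ^ i) ∈ (⊤ : Subgroup G).lowerCentralSeries i := by
  induction i with
  | zero => exact mem_top _
  | succ i ih =>
    rw [pow_succ, zpow_mul]
    exact zpow_sub_mem_lowerCentralSeries_succ (conj_zpow_of_conj_eq hrel _) ih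

end LowerCentralSeries

section Conjugates

variable {G : Type*} [Group G]

theorem MulAut.conj_zpow_neg_succ_apply (t x : G) (j : ℤ) :
    MulAut.conj (t ^ (-(j + 1))) x = MulAut.conj (t ^ (-j)) (t⁻¹ * x * t) := by
  simp only [MulAut.conj_apply]; group

theorem MulAut.conj_zpow_neg_succ_apply' (t x : G) (j : ℤ) :
    MulAut.conj (t ^ (-(j + 1))) x = t⁻¹ * MulAut.conj (t ^ (-j)) x * t := by
  simp only [MulAut.conj_apply]; group

end Conjugates

section Core

variable {Q : Type*} [Group Q] {t a : Q} {m n μ ν m₁ n₁ : ℤ}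

theorem commElt_conj_zpow_succ_left (hrel : t⁻¹ * a ^ m * t = a ^ n) (hm : m = μ * ν * m₁)
    (hn : n = μ * ν * n₁)
    (hc : ∀ j : ℤ, commElt (MulAut.conj (t ^ (-j)) (a ^ μ)) (a ^ ν) ∈ center Q) (j : ℤ) :
    commElt (MulAut.conj (t ^ (-(j + 1))) (a ^ μ)) (a ^ ν) ^ (ν * m₁) =
      commElt (MulAut.conj (t ^ (-j)) (a ^ μ)) (a ^ ν) ^ (ν * n₁) := by
  rw [← commElt_zpow_left_of_mem_center (hc _), ← commElt_zpow_left_of_mem_center (hc _),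
    ← map_zpow, ← map_zpow, ← zpow_mul, ← zpow_mul, show μ * (ν * m₁) = m by rw [hm]; ring,
    show μ * (ν * n₁) = n by rw [hn]; ring, MulAut.conj_zpow_neg_succ_apply, hrel]

theorem commElt_conj_zpow_succ_right (hrel : t⁻¹ * a ^ m * t = a ^ n) (hm : m = μ * ν * m₁)
    (hn : n = μ * ν * n₁)
    (hc : ∀ j : ℤ, commElt (MulAut.conj (t ^ (-j)) (a ^ μ)) (a ^ ν) ∈ center Q) (j : ℤ) :
    commElt (MulAut.conj (t ^ (-(j + 1))) (a ^ μ)) (a ^ ν) ^ (μ * n₁) =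
      commElt (MulAut.conj (t ^ (-j)) (a ^ μ)) (a ^ ν) ^ (μ * m₁) := by
  set b₁ := t⁻¹ * a * t
  have hconj : commElt (MulAut.conj (t ^ (-(j + 1))) (a ^ μ)) (b₁ ^ ν) =
      commElt (MulAut.conj (t ^ (-j)) (a ^ μ)) (a ^ ν) := by
    rw [MulAut.conj_zpow_neg_succ_apply', inv_conj_zpow, commElt_inv_conj, mul_assoc,
      ← mem_center_iff.mp (hc j) t, inv_mul_cancel_left]
  calc commElt (MulAut.conj (t ^ (-(j + 1))) (a ^ μ)) (a ^ ν) ^ (μ * n₁)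
      = commElt (MulAut.conj (t ^ (-(j + 1))) (a ^ μ)) (t⁻¹ * a ^ m * t) := by
        rw [← commElt_zpow_right_of_mem_center (hc _), ← zpow_mul, hrel, hn]; ring_nf
    _ = commElt (MulAut.conj (t ^ (-(j + 1))) (a ^ μ)) (b₁ ^ ν) ^ (μ * m₁) := by
        rw [← commElt_zpow_right_of_mem_center (hconj ▸ hc j), ← zpow_mul, inv_conj_zpow, hm]
        ring_nf
    _ = commElt (MulAut.conj (t ^ (-j)) (a ^ μ)) (a ^ ν) ^ (μ * m₁) := by rw [hconj]

theorem commElt_conj_eq_one (hrel : t⁻¹ * a ^ m * t = a ^ n) (hm : m = μ * ν * m₁)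
    (hn : n = μ * ν * n₁) (hμν : IsCoprime μ ν) (hmn₁ : IsCoprime m₁ n₁) (hd : μ * ν ≠ 0)
    (hfin : m ≠ n → IsOfFinOrder a)
    (hc : ∀ j : ℤ, commElt (MulAut.conj (t ^ (-j)) (a ^ μ)) (a ^ ν) ∈ center Q) (k : ℤ) :
    commElt (MulAut.conj (t ^ (-k)) (a ^ μ)) (a ^ ν) = 1 := by
  set c := fun j : ℤ => commElt (MulAut.conj (t ^ (-j)) (a ^ μ)) (a ^ ν)
  have hc₀ : c 0 = 1 := by
    simp only [c, neg_zero, zpow_zero, map_one, MulAut.one_apply]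
    exact (Commute.zpow_zpow_self a μ ν).commElt_eq_one
  rw [← orderOf_eq_one_iff]
  by_contra hK
  obtain ⟨p, hp, hpK⟩ := Nat.exists_prime_and_dvd hK
  have hP : Prime (p : ℤ) := Nat.prime_iff_prime_int.mp hp
  have hpμν : ¬ ((p : ℤ) ∣ μ ∧ (p : ℤ) ∣ ν) := fun h => hP.not_isUnit (hμν.isUnit_of_dvd' h.1 h.2)
  have hpmn₁ : ¬ ((p : ℤ) ∣ m₁ ∧ (p : ℤ) ∣ n₁) := fun h =>
    hP.not_isUnit (hmn₁.isUnit_of_dvd' h.1 h.2)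
  have hpν : (p : ℤ) ∣ ν * m₁ * (ν * n₁) := Int.natCast_dvd.mpr <| hp.dvd_of_dvd_pow <|
    hpK.trans (orderOf_dvd_of_zpow_succ_eq hc₀ (commElt_conj_zpow_succ_left hrel hm hn hc) k)
  have hpμ : (p : ℤ) ∣ μ * n₁ * (μ * m₁) := Int.natCast_dvd.mpr <| hp.dvd_of_dvd_pow <|
    hpK.trans (orderOf_dvd_of_zpow_succ_eq hc₀ (commElt_conj_zpow_succ_right hrel hm hn hc) k)
  have hpm : (p : ℤ) ∣ m₁ ∨ (p : ℤ) ∣ n₁ := by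
    simp only [hP.dvd_mul] at hpν hpμ
    tauto
  have hpa : p ∣ orderOf (a ^ μ) := by
    simpa only [MulEquiv.orderOf_eq] using hpK.trans (orderOf_commElt_dvd_orderOf_left (hc k))
  have hpd : p ∣ orderOf (a ^ (μ * ν)) :=
    hp.dvd_orderOf_zpow_mul hpa (hpK.trans (orderOf_commElt_dvd_orderOf_right (hc k))) hpμν
  have hmn : m ≠ n := by
    rw [hm, hn]
    refine fun h => hpmn₁ ?_
    rw [mul_left_cancel₀ hd h] at hpm ⊢
    tauto
  have hd_fin : orderOf (a ^ (μ * ν)) ≠ 0 := ((hfin hmn).zpow).orderOf_pos.ne'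
  have hord : orderOf ((a ^ (μ * ν)) ^ m₁) = orderOf ((a ^ (μ * ν)) ^ n₁) := by
    rw [← zpow_mul, ← zpow_mul, ← hm, ← hn, ← hrel]
    simpa using (MulEquiv.orderOf_eq (MulAut.conj t⁻¹) (a ^ m)).symm
  rcases hpm with hpm | hpn
  · exact orderOf_zpow_ne_of_prime_dvd hp hd_fin hpd hpm (fun h => hpmn₁ ⟨hpm, h⟩) hord
  · exact orderOf_zpow_ne_of_prime_dvd hp hd_fin hpd hpn (fun h => hpmn₁ ⟨h, hpn⟩) hord.symm

end Core

theorem commElt_conj_mem_lowerCentralSeries {G : Type*} [Group G] {t a : G} {m n μ ν m₁ n₁ : ℤ}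
    (hrel : t⁻¹ * a ^ m * t = a ^ n) (hm : m = μ * ν * m₁) (hn : n = μ * ν * n₁)
    (hμν : IsCoprime μ ν) (hmn₁ : IsCoprime m₁ n₁) (hd : μ * ν ≠ 0) (i : ℕ) (k : ℤ) :
    commElt (MulAut.conj (t ^ (-k)) (a ^ μ)) (a ^ ν) ∈ (⊤ : Subgroup G).lowerCentralSeries i := by
  induction i generalizing k with
  | zero => exact mem_top _
  | succ i ih =>
    set φ := QuotientGroup.mk' ((⊤ : Subgroup G).lowerCentralSeries (i + 1))
    have hφ : ∀ j : ℤ, φ (commElt (MulAut.conj (t ^ (-j)) (a ^ μ)) (a ^ ν)) =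
        commElt (MulAut.conj (φ t ^ (-j)) (φ a ^ μ)) (φ a ^ ν) := by
      intro j
      rw [MulAut.conj_apply, MulAut.conj_apply]
      simp only [map_commElt, map_mul, map_inv, map_zpow]
    have hrel' : (φ t)⁻¹ * φ a ^ m * φ t = φ a ^ n := by
      simpa only [map_mul, map_inv, map_zpow] using congrArg φ hrel
    have hfin : m ≠ n → IsOfFinOrder (φ a) := fun hmn => by
      refine isOfFinOrder_iff_zpow_eq_one.mpr
        ⟨(n - m) ^ (i + 1), pow_ne_zero _ (sub_ne_zero.mpr hmn.symm), ?_⟩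
      rw [← map_zpow, QuotientGroup.mk'_apply, QuotientGroup.eq_one_iff]
      exact zpow_pow_sub_mem_lowerCentralSeries hrel (i + 1)
    have hc : ∀ j : ℤ, commElt (MulAut.conj (φ t ^ (-j)) (φ a ^ μ)) (φ a ^ ν) ∈ center _ :=
      fun j => hφ j ▸ mk_mem_center_of_mem_lowerCentralSeries_s13 (ih j)
    rw [← QuotientGroup.eq_one_iff, ← QuotientGroup.mk'_apply, hφ]
    exact commElt_conj_eq_one hrel' hm hn hμν hmn₁ hd hfin hc k

theorem BS.t_inv_mul_a_zpow_mul_t_s13 (m n : ℤ) :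
    (BS.t m n)⁻¹ * BS.a m n ^ m * BS.t m n = BS.a m n ^ n := by
  have := PresentedGroup.mk_eq_mk_of_mul_inv_mem (rels := BSRels m n)
    (x := (FreeGroup.of 0)⁻¹ * FreeGroup.of 1 ^ m * FreeGroup.of 0) (y := FreeGroup.of 1 ^ n) rfl
  simp only [map_mul, map_inv, map_zpow] at this
  exact this

theorem stmt13_general (m n : ℤ) (hm : 0 < m) (d : ℕ) (hd : (d : ℤ) = Int.gcd m n)
    (μ ν : ℕ) (hcop : Nat.gcd μ ν = 1) (hμν : μ * ν = d) (k : ℤ) :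
    commElt ((BS.t m n) ^ (-k) * (BS.a m n) ^ (μ : ℤ) * (BS.t m n) ^ k) ((BS.a m n) ^ (ν : ℤ))
      ∈ lcsOmega (BS m n) := by
  have hgcd : 0 < Int.gcd m n := Int.gcd_pos_of_ne_zero_left n hm.ne'
  have hdμν : (d : ℤ) = μ * ν := by exact_mod_cast hμν.symm
  have hfactor : ∀ x : ℤ, (d : ℤ) ∣ x → x = μ * ν * (x / d) := fun x hx => by
    rw [← hdμν, Int.mul_ediv_cancel' hx]
  have hmem := commElt_conj_mem_lowerCentralSeries (BS.t_inv_mul_a_zpow_mul_t_s13 m n)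
    (hfactor m (hd ▸ Int.gcd_dvd_left m n)) (hfactor n (hd ▸ Int.gcd_dvd_right m n))
    (Nat.isCoprime_iff_coprime.mpr hcop)
    (Int.isCoprime_iff_gcd_eq_one.mpr (hd ▸ Int.gcd_div_gcd_div_gcd hgcd))
    (by rw [← hdμν]; omega)
  simp only [lcsOmega, mem_iInf]
  intro i
  simpa only [MulAut.conj_apply, zpow_neg, inv_inv] using hmem i k

theorem stmt13 (m n : ℤ) (hm : 0 < m) (hmn : m ≤ |n|) (d : ℕ) (hd : (d : ℤ) = Int.gcd m n)
    (μ ν : ℕ) (hμ : 1 ≤ μ) (hν : 1 ≤ ν) (hμd : μ ≤ d) (hνd : ν ≤ d)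
    (hcop : Nat.gcd μ ν = 1) (hμν : μ * ν = d) (k : ℤ) :
    commElt ((BS.t m n) ^ (-k) * (BS.a m n) ^ (μ : ℤ) * (BS.t m n) ^ k) ((BS.a m n) ^ (ν : ℤ))
      ∈ lcsOmega (BS m n) :=
  stmt13_general m n hm d hd μ ν hcop hμν k
end

section
/- Let G = BS(m,n) be the Baumslag–Solitar group with 0 < m ≤ |n|, and suppose d = gcd(m,n) is a power of a prime number p (d = p^μ with μ ≥ 1). Then [t^{-k} a^d t^k, a] ∈ [γ_ω(G), G] and [t^{-k} a t^k, a^d] ∈ [γ_ω(G), G] for all natural numbers k. -/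
/-!
Write `a_j = t⁻ʲ a tʲ` (in Lean `(MulAut.conj t⁻¹ ^ j) a`) and `d = gcd(m, n)`.

Modulo `γ_{c+1}` the generator `a` has finite order: for every power `x` of `a`,
`t⁻¹ xᵐ t = xⁿ` makes `x^(n-m)` a commutator with `t⁻¹`, so `a^((n-m)^c) ∈ γ_{c+1}`.
When `a` has finite order, `a_{j+1}^m = a_j^n` and the equal orders of `a_{j+1}` and `a_j`
force `⟨a_{j+1}^d⟩ = ⟨a_j^d⟩`; so all `a_j^d` generate the same cyclic group, and
`[a_j^d, a] ∈ γ_ω`. (If `m = n`, then `a^d` commutes with `t`.)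

In `G / [γ_ω, G]` the commutators `u_j = [a_j^d, a]` are therefore central, hence fixed by
conjugation by `t`, i.e. `[a_{i+j}^d, a_i] = u_j`; and central commutators are
bimultiplicative. This yields `u_{j+1}^(m/d) = u_j^(n/d)` and `u_j^m = u_{j+1}^n`. Since
`m/d` and `n/d` are coprime, the two relations together kill `u_j^d`; then the first one
kills `u_j` itself, because the prime `p` cannot divide both `m/d` and `n/d`.
-/

open Subgroup
open scoped commutatorElement

section

variable {G : Type*} [Group G]

theorem eq_one_of_zpow_eq_one_of_isCoprime {x : G} {a b : ℤ} (hab : IsCoprime a b)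
    (ha : x ^ a = 1) (hb : x ^ b = 1) : x = 1 := by
  obtain ⟨u, v, huv⟩ := hab
  rw [← zpow_one x, ← huv, zpow_add, mul_comm u, mul_comm v, zpow_mul, zpow_mul, ha, hb,
    one_zpow, one_zpow, one_mul]

theorem eq_one_of_zpow_prime_pow_eq_one {x : G} {p μ : ℕ} (hp : p.Prime) {e : ℤ}
    (he : ¬(p : ℤ) ∣ e) (s : ℕ) (hxp : x ^ ((p ^ μ : ℕ) : ℤ) = 1) (hxe : x ^ (e ^ s) = 1) :
    x = 1 := by
  have hcop : IsCoprime (p : ℤ) e := (Nat.prime_iff_prime_int.mp hp).coprime_iff_not_dvd.mpr he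
  exact eq_one_of_zpow_eq_one_of_isCoprime (by push_cast; exact hcop.pow) hxp hxe

variable {a b : ℤ} {h : ℤ → G}

theorem zpow_pow_eq_of_zpow_succ (hrec : ∀ k, h (k + 1) ^ a = h k ^ b) (k : ℤ) (s : ℕ) :
    h (k + s) ^ (a ^ s) = h k ^ (b ^ s) := by
  induction s with
  | zero => simp
  | succ s ih =>
    calc h (k + (s + 1 : ℕ)) ^ (a ^ (s + 1)) = (h (k + s + 1) ^ a) ^ (a ^ s) := by
          rw [pow_succ', zpow_mul]; push_cast; rw [add_assoc]
      _ = (h (k + s) ^ (a ^ s)) ^ b := by rw [hrec, ← zpow_mul, ← zpow_mul, mul_comm]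
      _ = h k ^ (b ^ (s + 1)) := by rw [ih, ← zpow_mul, pow_succ]

theorem eq_one_of_zpow_succ_of_isCoprime (hab : IsCoprime a b) (h0 : h 0 = 1)
    (hfwd : ∀ k, h (k + 1) ^ a = h k ^ b) (hbwd : ∀ k, h k ^ a = h (k + 1) ^ b) (k : ℤ) :
    h k = 1 := by
  induction k using Int.induction_on with
  | zero => exact h0
  | succ k ih =>
    exact eq_one_of_zpow_eq_one_of_isCoprime hab (by rw [hfwd, ih, one_zpow])
      (by rw [← hbwd, ih, one_zpow])
  | pred k ih =>
    refine eq_one_of_zpow_eq_one_of_isCoprime hab ?_ ?_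
    · rw [hbwd, sub_add_cancel, ih, one_zpow]
    · rw [← hfwd, sub_add_cancel, ih, one_zpow]

variable {p μ : ℕ}

theorem eq_one_of_zpow_succ_of_prime_pow_nat (hab : IsCoprime a b) (hp : p.Prime)
    (h0 : h 0 = 1) (hrec : ∀ k, h (k + 1) ^ a = h k ^ b)
    (htor : ∀ k, h k ^ ((p ^ μ : ℕ) : ℤ) = 1) (k : ℕ) : h k = 1 := by
  have hp' : Prime (p : ℤ) := Nat.prime_iff_prime_int.mp hp
  by_cases ha : (p : ℤ) ∣ a
  · have hb : ¬(p : ℤ) ∣ b := fun hb => hp'.not_isUnit (hab.isUnit_of_dvd' ha hb)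
    refine eq_one_of_zpow_prime_pow_eq_one hp hb μ (htor k) ?_
    obtain ⟨c, hc⟩ := pow_dvd_pow_of_dvd ha μ
    rw [← zpow_pow_eq_of_zpow_succ hrec, hc, zpow_mul]
    push_cast at htor
    rw [htor, one_zpow]
  · refine eq_one_of_zpow_prime_pow_eq_one hp ha k (htor k) ?_
    simpa [h0] using zpow_pow_eq_of_zpow_succ hrec 0 k

theorem eq_one_of_zpow_succ_of_prime_pow (hab : IsCoprime a b) (hp : p.Prime)
    (h0 : h 0 = 1) (hrec : ∀ k, h (k + 1) ^ a = h k ^ b)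
    (htor : ∀ k, h k ^ ((p ^ μ : ℕ) : ℤ) = 1) (k : ℤ) : h k = 1 := by
  obtain ⟨k, rfl | rfl⟩ := Int.eq_nat_or_neg k
  · exact eq_one_of_zpow_succ_of_prime_pow_nat hab hp h0 hrec htor k
  · refine eq_one_of_zpow_succ_of_prime_pow_nat (h := fun k => h (-k)) hab.symm hp
      (by simpa using h0) (fun k => ?_) (fun k => htor _) k
    simpa [neg_add, add_comm] using (hrec (-(k + 1))).symm

theorem zpowers_zpow_eq_zpowers_zpow_gcd (x : G) (s : ℤ) :
    zpowers (x ^ s) = zpowers (x ^ ((Int.gcd (orderOf x) s : ℕ) : ℤ)) := by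
  apply le_antisymm <;> rw [zpowers_le]
  · obtain ⟨c, hc⟩ := Int.gcd_dvd_right (orderOf x : ℤ) s
    exact ⟨c, by dsimp only; rw [← zpow_mul, ← hc]⟩
  · refine ⟨Int.gcdB (orderOf x) s, ?_⟩
    dsimp only
    rw [Int.gcd_eq_gcd_ab, zpow_add, zpow_mul, zpow_natCast, pow_orderOf_eq_one, one_zpow,
      one_mul, ← zpow_mul]

theorem zpowers_zpow_eq_zpowers_zpow_of_gcd_eq (x : G) {r s : ℤ}
    (h : Int.gcd (orderOf x) r = Int.gcd (orderOf x) s) : zpowers (x ^ r) = zpowers (x ^ s) := by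
  rw [zpowers_zpow_eq_zpowers_zpow_gcd x r, h, ← zpowers_zpow_eq_zpowers_zpow_gcd]

theorem IsOfFinOrder.orderOf_zpow {x : G} (hx : IsOfFinOrder x) (s : ℤ) :
    orderOf (x ^ s) = orderOf x / Int.gcd (orderOf x) s := by
  have hpos : 0 < Int.gcd (orderOf x) s :=
    Int.gcd_pos_of_ne_zero_left _ (by exact_mod_cast hx.orderOf_pos.ne')
  rw [← Nat.card_zpowers, zpowers_zpow_eq_zpowers_zpow_gcd, Nat.card_zpowers, zpow_natCast,
    orderOf_pow_of_dvd hpos.ne' (Int.natCast_dvd_natCast.mp (Int.gcd_dvd_left _ _))]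

theorem zpowers_zpow_gcd_eq_of_zpow_eq {x y : G} (hx : IsOfFinOrder x)
    (hxy : orderOf y = orderOf x) {m n : ℤ} (h : y ^ m = x ^ n) :
    zpowers (y ^ ((Int.gcd m n : ℕ) : ℤ)) = zpowers (x ^ ((Int.gcd m n : ℕ) : ℤ)) := by
  set A := orderOf x
  have hy : IsOfFinOrder y := orderOf_pos_iff.mp (hxy ▸ hx.orderOf_pos)
  have hdvd (s : ℤ) : Int.gcd A s ∣ A := Int.natCast_dvd_natCast.mp (Int.gcd_dvd_left _ _)
  have hm_n : Int.gcd A m = Int.gcd A n := by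
    have hord := congrArg orderOf h
    rw [hy.orderOf_zpow, hx.orderOf_zpow, hxy] at hord
    rw [← Nat.div_div_self (hdvd m) hx.orderOf_pos.ne', hord,
      Nat.div_div_self (hdvd n) hx.orderOf_pos.ne']
  have hgcd_n : Int.gcd A (Int.gcd m n) = Int.gcd A n := by
    rw [← Int.gcd_assoc, hm_n, Int.gcd_assoc, Int.gcd_self]
    simp [Int.gcd, Int.natAbs_abs]
  calc zpowers (y ^ ((Int.gcd m n : ℕ) : ℤ)) = zpowers (y ^ m) :=
        zpowers_zpow_eq_zpowers_zpow_of_gcd_eq y (by rw [hxy, hgcd_n, hm_n])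
    _ = zpowers (x ^ n) := by rw [h]
    _ = zpowers (x ^ ((Int.gcd m n : ℕ) : ℤ)) :=
        zpowers_zpow_eq_zpowers_zpow_of_gcd_eq x hgcd_n.symm

theorem zpowers_zpow_gcd_orbit_eq (σ : MulAut G) {a : G} (ha : IsOfFinOrder a) {m n : ℤ}
    (hrel : σ (a ^ m) = a ^ n) (j : ℤ) :
    zpowers ((σ ^ j) (a ^ ((Int.gcd m n : ℕ) : ℤ))) = zpowers (a ^ ((Int.gcd m n : ℕ) : ℤ)) := by
  have hstep (j : ℤ) : zpowers ((σ ^ (j + 1)) (a ^ ((Int.gcd m n : ℕ) : ℤ))) =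
      zpowers ((σ ^ j) (a ^ ((Int.gcd m n : ℕ) : ℤ))) := by
    simp only [map_zpow]
    refine zpowers_zpow_gcd_eq_of_zpow_eq ?_ (by simp only [MulEquiv.orderOf_eq]) ?_
    · exact orderOf_pos_iff.mp (by rw [MulEquiv.orderOf_eq]; exact ha.orderOf_pos)
    · rw [← map_zpow, ← map_zpow, zpow_add_one, MulAut.mul_apply, hrel]
  induction j using Int.induction_on with
  | zero => rfl
  | succ j ih => rw [hstep, ih]
  | pred j ih => rw [← ih, ← hstep, sub_add_cancel]

theorem commute_zpow_gcd_orbit (σ : MulAut G) {a : G} (ha : IsOfFinOrder a) {m n : ℤ}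
    (hrel : σ (a ^ m) = a ^ n) (j : ℤ) :
    Commute ((σ ^ j) (a ^ ((Int.gcd m n : ℕ) : ℤ))) a := by
  obtain ⟨k, hk⟩ :
      (σ ^ j) (a ^ ((Int.gcd m n : ℕ) : ℤ)) ∈ zpowers (a ^ ((Int.gcd m n : ℕ) : ℤ)) := by
    rw [← zpowers_zpow_gcd_orbit_eq σ ha hrel j]
    exact mem_zpowers _
  rw [← hk]
  exact ((Commute.refl a).zpow_left _).zpow_left _

theorem MonoidHom.map_conj_zpow_apply {H : Type*} [Group H] (f : G →* H) (t x : G) (j : ℤ) :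
    f ((MulAut.conj t ^ j) x) = (MulAut.conj (f t) ^ j) (f x) := by
  simp only [← map_zpow, MulAut.conj_apply, map_mul, map_inv]

theorem commutatorElement_mem_iff_commute {N : Subgroup G} [N.Normal] {x y : G} :
    ⁅x, y⁆ ∈ N ↔ Commute (QuotientGroup.mk' N x) (QuotientGroup.mk' N y) := by
  rw [← commutatorElement_eq_one_iff_commute, ← map_commutatorElement, QuotientGroup.mk'_apply,
    QuotientGroup.eq_one_iff]

theorem zpow_sub_pow_mem_lowerCentralSeries {t a : G} {m n : ℤ}
    (hrel : MulAut.conj t (a ^ m) = a ^ n) (c : ℕ) :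
    a ^ ((n - m) ^ c) ∈ (⊤ : Subgroup G).lowerCentralSeries c := by
  induction c with
  | zero => exact mem_top _
  | succ c ih =>
    set x := a ^ ((n - m) ^ c)
    have hx : MulAut.conj t (x ^ m) = x ^ n := by
      rw [← zpow_mul, mul_comm, zpow_mul, map_zpow, hrel, ← zpow_mul, mul_comm, zpow_mul]
    have hcomm : a ^ ((n - m) ^ (c + 1)) = ⁅t, x ^ m⁆ := by
      rw [commutatorElement_def, ← MulAut.conj_apply, hx, pow_succ, zpow_mul, zpow_sub]
    rw [hcomm, Subgroup.lowerCentralSeries_succ, commutator_comm]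
    exact commutator_mem_commutator (mem_top t) (zpow_mem ih m)

theorem conj_zpow_apply_zpow_gcd_self {t a : G} {m : ℤ} (hrel : MulAut.conj t (a ^ m) = a ^ m)
    (j : ℤ) : (MulAut.conj t ^ j) (a ^ ((Int.gcd m m : ℕ) : ℤ)) = a ^ ((Int.gcd m m : ℕ) : ℤ) := by
  have hc : Commute t (a ^ m) := by
    rw [Commute, SemiconjBy, ← mul_inv_eq_iff_eq_mul, ← MulAut.conj_apply, hrel]
  rw [Int.gcd_self, ← Int.mul_sign_self, zpow_mul, ← map_zpow, MulAut.conj_apply,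
    mul_inv_eq_iff_eq_mul]
  exact ((hc.zpow_right _).zpow_left j).eq

theorem commutatorElement_zpow_gcd_orbit_mem_lcsOmega {t a : G} {m n : ℤ}
    (hrel : MulAut.conj t (a ^ m) = a ^ n) (j : ℤ) :
    ⁅(MulAut.conj t ^ j) (a ^ ((Int.gcd m n : ℕ) : ℤ)), a⁆ ∈ lcsOmega G := by
  by_cases hmn : m = n
  · subst hmn
    rw [conj_zpow_apply_zpow_gcd_self hrel,
      commutatorElement_eq_one_iff_commute.mpr ((Commute.refl a).zpow_left _)]
    exact one_mem _
  rw [lcsOmega, mem_iInf]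
  intro c
  set π := QuotientGroup.mk' ((⊤ : Subgroup G).lowerCentralSeries c)
  rw [commutatorElement_mem_iff_commute, MonoidHom.map_conj_zpow_apply, map_zpow]
  refine commute_zpow_gcd_orbit _ ?_ ?_ j
  · refine isOfFinOrder_iff_zpow_eq_one.mpr
      ⟨(n - m) ^ c, pow_ne_zero _ (sub_ne_zero.mpr (Ne.symm hmn)), ?_⟩
    rw [← map_zpow, QuotientGroup.mk'_apply, QuotientGroup.eq_one_iff]
    exact zpow_sub_pow_mem_lowerCentralSeries hrel c
  · simpa only [MulAut.conj_apply, map_mul, map_inv, map_zpow] using congrArg π hrel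

theorem commutatorElement_zpow_right {x y : G} (h : Commute ⁅x, y⁆ y) (s : ℤ) :
    ⁅x, y ^ s⁆ = ⁅x, y⁆ ^ s := by
  have hxy : x * y * x⁻¹ = ⁅x, y⁆ * y := by rw [commutatorElement_def, inv_mul_cancel_right]
  rw [commutatorElement_def, ← conj_zpow, hxy, h.mul_zpow, mul_inv_cancel_right]

theorem commutatorElement_zpow_left {x y : G} (h : Commute ⁅x, y⁆ x) (s : ℤ) :
    ⁅x ^ s, y⁆ = ⁅x, y⁆ ^ s := by
  have h' : Commute ⁅y, x⁆ x := by rw [← commutatorElement_inv]; exact h.inv_left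
  rw [← commutatorElement_inv y, commutatorElement_zpow_right h', ← inv_zpow,
    commutatorElement_inv]

theorem MulAut.conj_apply_of_mem_center {z : G} (hz : z ∈ center G) (g : G) :
    MulAut.conj g z = z := by
  rw [MulAut.conj_apply, mem_center_iff.mp hz g, mul_inv_cancel_right]

theorem commute_zpow_gcd_orbit_of_mem_center {τ α : G} {m n : ℤ} {p μ : ℕ} (hp : p.Prime)
    (hd : Int.gcd m n = p ^ μ) (hrel : MulAut.conj τ (α ^ m) = α ^ n)
    (hcent : ∀ j : ℤ, ⁅(MulAut.conj τ ^ j) (α ^ ((Int.gcd m n : ℕ) : ℤ)), α⁆ ∈ center G)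
    (j : ℤ) :
    Commute ((MulAut.conj τ ^ j) (α ^ ((Int.gcd m n : ℕ) : ℤ))) α ∧
      Commute ((MulAut.conj τ ^ j) α) (α ^ ((Int.gcd m n : ℕ) : ℤ)) := by
  set σ := MulAut.conj τ
  set d : ℕ := Int.gcd m n
  obtain ⟨m', hm⟩ : (d : ℤ) ∣ m := Int.gcd_dvd_left m n
  obtain ⟨n', hn⟩ : (d : ℤ) ∣ n := Int.gcd_dvd_right m n
  set u : ℤ → G := fun j => ⁅(σ ^ j) (α ^ (d : ℤ)), α⁆
  have hu_comm (j : ℤ) (y : G) : Commute (u j) y := (mem_center_iff.mp (hcent j) y).symm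
  have hshift (i j : ℤ) : ⁅(σ ^ (i + j)) (α ^ (d : ℤ)), (σ ^ i) α⁆ = u j := by
    rw [zpow_add, MulAut.mul_apply, ← map_commutatorElement, ← map_zpow]
    exact MulAut.conj_apply_of_mem_center (hcent j) _
  have hcop : IsCoprime m' n' := by
    have hd0 : d ≠ 0 := hd ▸ (pow_pos hp.pos μ).ne'
    rw [Int.isCoprime_iff_gcd_eq_one, ← Nat.mul_eq_left hd0]
    calc d * Int.gcd m' n' = Int.gcd (d * m') (d * n') := by
          rw [Int.gcd_mul_left, Int.natAbs_natCast]
      _ = d := by rw [← hm, ← hn]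
  have hu0 : u 0 = 1 :=
    commutatorElement_eq_one_iff_commute.mpr ((Commute.refl α).zpow_left _)
  have hrec (j : ℤ) : u (j + 1) ^ m' = u j ^ n' := by
    rw [← commutatorElement_zpow_left (hu_comm _ _), ← commutatorElement_zpow_left (hu_comm _ _),
      ← map_zpow (σ ^ (j + 1)), ← map_zpow (σ ^ j), ← zpow_mul, ← zpow_mul, ← hm, ← hn,
      zpow_add_one, MulAut.mul_apply, hrel]
  have hback (j : ℤ) : u j ^ m = u (j + 1) ^ n := by
    rw [← hshift 1 j, ← commutatorElement_zpow_right ((hshift 1 j).symm ▸ hu_comm j _), zpow_one,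
      ← map_zpow σ, hrel, add_comm, commutatorElement_zpow_right (hu_comm _ _)]
  have hW (j : ℤ) : u j ^ (d : ℤ) = 1 := by
    refine eq_one_of_zpow_succ_of_isCoprime (h := fun j => u j ^ (d : ℤ)) hcop
      (by simp only [hu0, one_zpow]) (fun j => ?_) (fun j => ?_) j
    · rw [← zpow_mul, mul_comm, zpow_mul, hrec, ← zpow_mul, mul_comm, zpow_mul]
    · rw [← zpow_mul, ← hm, hback, hn, zpow_mul]
  have hu (j : ℤ) : u j = 1 :=
    eq_one_of_zpow_succ_of_prime_pow hcop hp hu0 hrec (fun j => by rw [← hd]; exact hW j) j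
  refine ⟨commutatorElement_eq_one_iff_commute.mp (hu j), ?_⟩
  have h0 := hshift j (-j)
  rw [add_neg_cancel, zpow_zero, MulAut.one_apply, hu] at h0
  exact (commutatorElement_eq_one_iff_commute.mp h0).symm

instance lcsOmega.normal : (lcsOmega G).Normal :=
  normal_iInf_normal fun _ => inferInstance

theorem QuotientGroup.mk'_mem_center_of_mem (N : Subgroup G) [N.Normal] {x : G} (hx : x ∈ N) :
    QuotientGroup.mk' ⁅N, ⊤⁆ x ∈ center (G ⧸ ⁅N, ⊤⁆) := by
  have hle : N.map (QuotientGroup.mk' ⁅N, ⊤⁆) ≤ center (G ⧸ ⁅N, ⊤⁆) := by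
    rw [← commutator_top_right_eq_bot_iff_le_center,
      ← map_top_of_surjective _ (QuotientGroup.mk'_surjective _), ← map_commutator,
      QuotientGroup.map_mk'_self]
  exact hle (mem_map_of_mem _ hx)

theorem commElt_mem_iff_commute {N : Subgroup G} [N.Normal] {x y : G} :
    commElt x y ∈ N ↔ Commute (QuotientGroup.mk' N x) (QuotientGroup.mk' N y) := by
  rw [show commElt x y = ⁅x⁻¹, y⁻¹⁆ by simp [commElt, commutatorElement_def],
    commutatorElement_mem_iff_commute, map_inv, map_inv, Commute.inv_inv_iff]

theorem MulAut.conj_inv_zpow_apply (t x : G) (j : ℤ) :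
    (MulAut.conj t⁻¹ ^ j) x = t ^ (-j) * x * t ^ j := by
  rw [← map_zpow, MulAut.conj_apply, inv_zpow', zpow_neg, inv_inv]

end

theorem BS.conj_t_inv_a_zpow (m n : ℤ) :
    MulAut.conj (BS.t m n)⁻¹ (BS.a m n ^ m) = BS.a m n ^ n := by
  rw [MulAut.conj_apply, inv_inv]
  exact PresentedGroup.mk_eq_mk_of_mul_inv_mem (Set.mem_singleton _)

theorem stmt15_general (m n : ℤ) (d : ℕ) (hd : (d : ℤ) = Int.gcd m n)
    (p μ : ℕ) (hp : p.Prime) (hdp : d = p ^ μ) (k : ℕ) :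
    commElt ((BS.t m n) ^ (-(k : ℤ)) * (BS.a m n) ^ (d : ℤ) * (BS.t m n) ^ (k : ℤ)) (BS.a m n)
        ∈ ⁅lcsOmega (BS m n), (⊤ : Subgroup (BS m n))⁆ ∧
    commElt ((BS.t m n) ^ (-(k : ℤ)) * BS.a m n * (BS.t m n) ^ (k : ℤ)) ((BS.a m n) ^ (d : ℤ))
        ∈ ⁅lcsOmega (BS m n), (⊤ : Subgroup (BS m n))⁆ := by
  obtain rfl : d = Int.gcd m n := by exact_mod_cast hd
  set t := BS.t m n
  set a := BS.a m n
  set π := QuotientGroup.mk' ⁅lcsOmega (BS m n), (⊤ : Subgroup (BS m n))⁆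
  have hrel : MulAut.conj (π t⁻¹) (π a ^ m) = π a ^ n := by
    simpa [MulAut.conj_apply] using congrArg π (BS.conj_t_inv_a_zpow m n)
  have hcent (j : ℤ) : ⁅(MulAut.conj (π t⁻¹) ^ j) (π a ^ ((Int.gcd m n : ℕ) : ℤ)), π a⁆ ∈
      center (BS m n ⧸ ⁅lcsOmega (BS m n), (⊤ : Subgroup (BS m n))⁆) := by
    rw [← map_zpow π, ← π.map_conj_zpow_apply, ← map_commutatorElement]
    exact QuotientGroup.mk'_mem_center_of_mem _
      (commutatorElement_zpow_gcd_orbit_mem_lcsOmega (BS.conj_t_inv_a_zpow m n) j)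
  obtain ⟨h₁, h₂⟩ := commute_zpow_gcd_orbit_of_mem_center hp hdp hrel hcent k
  rw [commElt_mem_iff_commute, commElt_mem_iff_commute, ← MulAut.conj_inv_zpow_apply,
    ← MulAut.conj_inv_zpow_apply, π.map_conj_zpow_apply, π.map_conj_zpow_apply, map_zpow, map_inv]
  exact ⟨h₁, h₂⟩

theorem stmt15 (m n : ℤ) (hm : 0 < m) (hmn : m ≤ |n|) (d : ℕ) (hd : (d : ℤ) = Int.gcd m n)
    (p μ : ℕ) (hp : p.Prime) (hμ : 1 ≤ μ) (hdp : d = p ^ μ) (k : ℕ) :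
    commElt ((BS.t m n) ^ (-(k : ℤ)) * (BS.a m n) ^ (d : ℤ) * (BS.t m n) ^ (k : ℤ)) (BS.a m n)
        ∈ ⁅lcsOmega (BS m n), (⊤ : Subgroup (BS m n))⁆ ∧
    commElt ((BS.t m n) ^ (-(k : ℤ)) * BS.a m n * (BS.t m n) ^ (k : ℤ)) ((BS.a m n) ^ (d : ℤ))
        ∈ ⁅lcsOmega (BS m n), (⊤ : Subgroup (BS m n))⁆ :=
  stmt15_general m n d hd p μ hp hdp k
end
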